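/- arXiv:1204.6438 — 2 statements merged into one kernel-verified Lean document; each statement's English description precedes it below -/
import Mathlib

section
/- Let Q be a manifold, G a Lie group acting on Q, ρ: G → O(k) a representation, and S: Q × ℝ^{k+1} × ℝ^{k+1} → TQ a Stratonovich operator of the form S(x,y,y') = Σ_{i=0}^{k} X_i(x)⟨e_i, y'⟩ for vector fields X_0,…,X_k on Q, where O(k) acts on ℝ^{k+1} = ℝ × ℝ^k trivially on the first factor. If S(gx, ρ(g)y, ρ(g)y') = g·S(x,y,y') for all g, x, y, y', then: (a) X_0 is G-invariant; (b) for every G-invariant smooth function f on Q, the function Σ_{i=1}^{k} X_i(X_i f) is also G-invariant. -/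
open Finset

/-- Equivariant Stratonovich operator on a space `E` (playing the role of the manifold `Q`)
acted on smoothly by a group `G` via `φ`, with `ρ : G → O(k)` and `O(k)` acting on
`ℝ^{k+1} = ℝ × ℝ^k` trivially on the first factor.  The Stratonovich operator is
`S(x, y, (t,w)) = t • X₀(x) + Σᵢ wᵢ • Xᵢ(x)` and equivariance means
`S(gx, ρ(g)y, ρ(g)y') = g·S(x,y,y')` (pushforward by the action).  Then:
(a) `X₀` is `G`-invariant, and (b) for every `G`-invariant smooth `f`,
the function `Σᵢ Xᵢ(Xᵢ f)` is `G`-invariant. -/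
theorem stmt6 {E : Type*} [NormedAddCommGroup E] [NormedSpace ℝ E]
    {G : Type*} [Group G] {k : ℕ}
    (φ : G → E → E)
    (hφ1 : ∀ x, φ 1 x = x)
    (hφmul : ∀ g h x, φ g (φ h x) = φ (g * h) x)
    (hφsmooth : ∀ g, ContDiff ℝ (⊤ : ℕ∞) (φ g))
    (X0 : E → E) (X : Fin k → E → E)
    (hX0 : ContDiff ℝ (⊤ : ℕ∞) X0) (hX : ∀ i, ContDiff ℝ (⊤ : ℕ∞) (X i))
    (ρ : G →* Matrix.orthogonalGroup (Fin k) ℝ)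
    (hequiv : ∀ (g : G) (x : E) (t : ℝ) (w : Fin k → ℝ),
      t • X0 (φ g x)
        + ∑ i, (∑ j, ((ρ g : Matrix (Fin k) (Fin k) ℝ) i j) * w j) • X i (φ g x)
      = fderiv ℝ (φ g) x (t • X0 x + ∑ i, w i • X i x)) :
    (∀ (g : G) (x : E), X0 (φ g x) = fderiv ℝ (φ g) x (X0 x))
    ∧ (∀ f : E → ℝ, ContDiff ℝ (⊤ : ℕ∞) f → (∀ (g : G) (x : E), f (φ g x) = f x) →
        ∀ (g : G) (x : E),
          (∑ i, fderiv ℝ (fun y => fderiv ℝ f y (X i y)) (φ g x) (X i (φ g x)))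
          = ∑ i, fderiv ℝ (fun y => fderiv ℝ f y (X i y)) x (X i x)) := by
  have hXd : ∀ i, Differentiable ℝ (X i) := fun i => (hX i).differentiable (by simp)
  have hφd : ∀ g, Differentiable ℝ (φ g) := fun g => (hφsmooth g).differentiable (by simp)
  have ha : ∀ (g : G) (x : E), X0 (φ g x) = fderiv ℝ (φ g) x (X0 x) := by
    intro g x
    have h := hequiv g x 1 0
    simpa using h
  refine ⟨ha, ?_⟩
  -- key: pushforward of X j
  have key : ∀ (g : G) (x : E) (j : Fin k),
      fderiv ℝ (φ g) x (X j x)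
        = ∑ i, ((ρ g : Matrix (Fin k) (Fin k) ℝ) i j) • X i (φ g x) := by
    intro g x j
    have h := hequiv g x 0 (Pi.single j 1)
    simp only [zero_smul, zero_add, Pi.single_apply, mul_ite, mul_one, mul_zero,
      Finset.sum_ite_eq', Finset.mem_univ, if_true, ite_smul] at h
    simpa using h.symm
  -- orthogonality
  have orth : ∀ (g : G) (i l : Fin k),
      (∑ j, ((ρ g : Matrix (Fin k) (Fin k) ℝ) i j) * ((ρ g : Matrix (Fin k) (Fin k) ℝ) l j))
        = if i = l then 1 else 0 := by
    intro g i l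
    have h := (ρ g).2.2
    have := congrArg (fun M => M i l) h
    simpa [Matrix.mul_apply, Matrix.one_apply, Matrix.star_eq_conjTranspose,
      Matrix.conjTranspose_apply] using this
  intro f hf hfinv g x
  have hfd : Differentiable ℝ f := hf.differentiable (by simp)
  set A : Matrix (Fin k) (Fin k) ℝ := (ρ g : Matrix (Fin k) (Fin k) ℝ) with hA
  -- the functions h i
  set h : Fin k → E → ℝ := fun i y => fderiv ℝ f y (X i y) with hh
  have hhsm : ∀ i, ContDiff ℝ (⊤ : ℕ∞) (h i) := by
    intro i
    exact (hf.fderiv_right (by simp)).clm_apply (hX i)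
  have hhd : ∀ i, Differentiable ℝ (h i) := fun i => (hhsm i).differentiable (by simp)
  -- chain rule for f invariant
  have hchain : ∀ y : E, fderiv ℝ f y = (fderiv ℝ f (φ g y)).comp (fderiv ℝ (φ g) y) := by
    intro y
    have : f = f ∘ φ g := by funext z; simp [hfinv g z]
    conv_lhs => rw [this]
    exact fderiv_comp y (hfd (φ g y)) (hφd g y)
  -- relation h j x = ∑ i A i j * h i (φ g x)
  have hrel : ∀ (j : Fin k) (y : E), h j y = ∑ i, A i j * h i (φ g y) := by
    intro j y
    rw [hh]
    simp only
    rw [hchain y]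
    simp only [ContinuousLinearMap.comp_apply]
    rw [key g y j]
    rw [map_sum]
    simp [mul_comm, hA]
  -- differentiate hrel
  have hstep : ∀ j : Fin k,
      fderiv ℝ (h j) x (X j x)
        = ∑ i, ∑ l, A i j * A l j * fderiv ℝ (h i) (φ g x) (X l (φ g x)) := by
    intro j
    have e1 : h j = fun y => ∑ i, A i j * h i (φ g y) := funext (hrel j)
    rw [e1]
    have hdiff : ∀ i ∈ Finset.univ, DifferentiableAt ℝ (fun y => A i j * h i (φ g y)) x :=
      fun i _ => ((((hhd i).comp (hφd g)).const_mul (A i j))).differentiableAt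
    rw [fderiv_fun_sum hdiff]
    rw [ContinuousLinearMap.sum_apply]
    refine Finset.sum_congr rfl fun i _ => ?_
    have hdi : DifferentiableAt ℝ (fun y => h i (φ g y)) x :=
      ((hhd i).comp (hφd g)).differentiableAt
    rw [fderiv_const_mul hdi (A i j)]
    rw [show (fun y => h i (φ g y)) = h i ∘ φ g from rfl,
      fderiv_comp x (hhd i (φ g x)) (hφd g x)]
    simp only [ContinuousLinearMap.smul_apply, ContinuousLinearMap.comp_apply, smul_eq_mul]
    rw [key g x j, map_sum, Finset.mul_sum]
    refine Finset.sum_congr rfl fun l _ => ?_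
    rw [map_smul]
    simp [mul_assoc, hA]
  calc (∑ i, fderiv ℝ (h i) (φ g x) (X i (φ g x)))
      = ∑ i, ∑ l, (if i = l then (1:ℝ) else 0) * fderiv ℝ (h i) (φ g x) (X l (φ g x)) := by
        simp
    _ = ∑ i, ∑ l, (∑ j, A i j * A l j) * fderiv ℝ (h i) (φ g x) (X l (φ g x)) := by
        refine Finset.sum_congr rfl fun i _ => Finset.sum_congr rfl fun l _ => ?_
        rw [orth g i l]
    _ = ∑ j, ∑ i, ∑ l, A i j * A l j * fderiv ℝ (h i) (φ g x) (X l (φ g x)) := by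
        have hswap : ∀ (T : Fin k → Fin k → Fin k → ℝ),
            (∑ i, ∑ l, ∑ j, T i l j) = ∑ j, ∑ i, ∑ l, T i l j := by
          intro T
          calc (∑ i, ∑ l, ∑ j, T i l j) = ∑ i, ∑ j, ∑ l, T i l j :=
                Finset.sum_congr rfl fun i _ => Finset.sum_comm
            _ = ∑ j, ∑ i, ∑ l, T i l j := Finset.sum_comm
        simp only [Finset.sum_mul]
        rw [hswap]
    _ = ∑ j, fderiv ℝ (h j) x (X j x) := by
        refine Finset.sum_congr rfl fun j _ => (hstep j).symm
end

section
/- Let (X_k) be k vector fields on Q transforming under a group action as g·X_j(x) = Σ_i g_{ij} X_i(gx) where (g_{ij}) ∈ O(k) is independent of x. Then for any G-invariant smooth f, Σ_i (X_i X_i f)(gx) = Σ_i (X_i X_i f)(x). -/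
open Finset

/-- If the frame of vector fields `(X₁,…,X_k)` rotates under the action of `g`
by a constant orthogonal matrix `O`, i.e. `T(φ g)(X_j(x)) = Σᵢ O_{ij} Xᵢ(g·x)`,
then for any `G`-invariant smooth `f`, the second order expression `Σᵢ Xᵢ(Xᵢ f)`
is invariant: `Σᵢ (XᵢXᵢf)(g·x) = Σᵢ (XᵢXᵢf)(x)`. -/
theorem stmt7 {E : Type*} [NormedAddCommGroup E] [NormedSpace ℝ E]
    {G : Type*} [Group G] {k : ℕ}
    (φ : G → E → E)
    (hφ1 : ∀ x, φ 1 x = x)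
    (hφmul : ∀ g h x, φ g (φ h x) = φ (g * h) x)
    (hφsmooth : ∀ g, ContDiff ℝ (⊤ : ℕ∞) (φ g))
    (X : Fin k → E → E) (hX : ∀ i, ContDiff ℝ (⊤ : ℕ∞) (X i))
    (g : G) (O : Matrix (Fin k) (Fin k) ℝ)
    (hO : O ∈ Matrix.orthogonalGroup (Fin k) ℝ)
    (hrot : ∀ (x : E) (j : Fin k),
      fderiv ℝ (φ g) x (X j x) = ∑ i, O i j • X i (φ g x))
    (f : E → ℝ) (hf : ContDiff ℝ (⊤ : ℕ∞) f)
    (hfinv : ∀ (h : G) (x : E), f (φ h x) = f x) :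
    ∀ x : E,
      (∑ i, fderiv ℝ (fun y => fderiv ℝ f y (X i y)) (φ g x) (X i (φ g x)))
      = ∑ i, fderiv ℝ (fun y => fderiv ℝ f y (X i y)) x (X i x) := by
  intro x
  set ψ := φ g with hψdef
  set F : Fin k → E → ℝ := fun i y => fderiv ℝ f y (X i y) with hFdef
  have hψ : ContDiff ℝ (⊤ : ℕ∞) ψ := hφsmooth g
  have hFsmooth : ∀ i, ContDiff ℝ (⊤ : ℕ∞) (F i) := fun i =>
    (hf.fderiv_right (by simp)).clm_apply (hX i)
  -- key pointwise identity: F j y = Σ i, O i j * F i (ψ y)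
  have key : ∀ j, F j = fun y => ∑ i, O i j * F i (ψ y) := by
    intro j
    funext y
    have hcomp : (f ∘ ψ) = f := funext fun z => hfinv g z
    have hdf : DifferentiableAt ℝ f (ψ y) := hf.differentiable (by simp) _
    have hdψ : DifferentiableAt ℝ ψ y := hψ.differentiable (by simp) y
    have h1 : fderiv ℝ f y = (fderiv ℝ f (ψ y)).comp (fderiv ℝ ψ y) := by
      rw [← fderiv_comp y hdf hdψ, hcomp]
    have : F j y = fderiv ℝ f (ψ y) (fderiv ℝ ψ y (X j y)) := by
      simp only [hFdef, h1, ContinuousLinearMap.comp_apply]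
    rw [this, hrot, map_sum]
    simp [map_smul, hFdef]
  -- differentiate: fderiv (F j) x (X j x) = Σ i, O i j * fderiv (F i ∘ ψ) x (X j x)
  have key2 : ∀ j, fderiv ℝ (F j) x (X j x)
      = ∑ i, ∑ l, O i j * (O l j * fderiv ℝ (F i) (ψ x) (X l (ψ x))) := by
    intro j
    rw [key j]
    have hdiff : ∀ i : Fin k, DifferentiableAt ℝ (fun y => O i j * F i (ψ y)) x :=
      fun i => (((hFsmooth i).differentiable (by simp)).comp
        (hψ.differentiable (by simp))).differentiableAt.const_mul _
    rw [fderiv_fun_sum (fun i _ => hdiff i)]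
    rw [ContinuousLinearMap.sum_apply]
    refine Finset.sum_congr rfl fun i _ => ?_
    have hdFi : DifferentiableAt ℝ (F i) (ψ x) := (hFsmooth i).differentiable (by simp) _
    have hdψx : DifferentiableAt ℝ ψ x := hψ.differentiable (by simp) x
    have hdc : DifferentiableAt ℝ (fun y => F i (ψ y)) x := by exact hdFi.comp x hdψx
    rw [fderiv_const_mul hdc]
    rw [ContinuousLinearMap.smul_apply]
    have hc : fderiv ℝ (fun y => F i (ψ y)) x = (fderiv ℝ (F i) (ψ x)).comp (fderiv ℝ ψ x) :=
      fderiv_comp x hdFi hdψx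
    rw [hc, ContinuousLinearMap.comp_apply, hrot, map_sum]
    simp only [map_smul, smul_eq_mul, Finset.mul_sum]
  -- orthogonality: Σ j, O i j * O l j = if i = l then 1 else 0
  have horth : ∀ i l, (∑ j, O i j * O l j) = if i = l then (1:ℝ) else 0 := by
    intro i l
    have h1 : O * star O = 1 := hO.2
    have := congrArg (fun M => M i l) h1
    simp only [Matrix.mul_apply, Matrix.star_eq_conjTranspose, Matrix.conjTranspose_apply,
      star_trivial, Matrix.one_apply] at this
    exact this
  calc (∑ i, fderiv ℝ (F i) (ψ x) (X i (ψ x)))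
      = ∑ i, ∑ l, (if i = l then (1:ℝ) else 0) * fderiv ℝ (F i) (ψ x) (X l (ψ x)) := by
        refine Finset.sum_congr rfl fun i _ => ?_
        rw [Finset.sum_eq_single i]
        · simp
        · intro l _ hl; simp [Ne.symm hl]
        · simp
    _ = ∑ i, ∑ l, (∑ j, O i j * O l j) * fderiv ℝ (F i) (ψ x) (X l (ψ x)) := by
        simp_rw [horth]
    _ = ∑ i, ∑ l, ∑ j, O i j * (O l j * fderiv ℝ (F i) (ψ x) (X l (ψ x))) := by
        refine Finset.sum_congr rfl fun i _ => Finset.sum_congr rfl fun l _ => ?_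
        rw [Finset.sum_mul]
        exact Finset.sum_congr rfl fun j _ => by ring
    _ = ∑ j, ∑ i, ∑ l, O i j * (O l j * fderiv ℝ (F i) (ψ x) (X l (ψ x))) := by
        rw [show (∑ i, ∑ l, ∑ j, O i j * (O l j * fderiv ℝ (F i) (ψ x) (X l (ψ x))))
            = ∑ i, ∑ j, ∑ l, O i j * (O l j * fderiv ℝ (F i) (ψ x) (X l (ψ x))) from
          Finset.sum_congr rfl fun i _ => Finset.sum_comm, Finset.sum_comm]
    _ = ∑ j, fderiv ℝ (F j) x (X j x) := by
        refine Finset.sum_congr rfl fun j _ => (key2 j).symm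
end
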